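/- arXiv:1306.0557 — 8 statements merged into one kernel-verified Lean document; each statement's English description precedes it below -/
import Mathlib

section
/- If the inf-sup condition inf_{0≠z∈X} sup_{0≠y∈Y} |b(z,y)|/(‖z‖_X ‖y‖_Y) ≥ C₁ holds, then for the optimal test space Y_h^opt = T(X_h) the discrete inf-sup condition inf_{0≠z_h∈X_h} sup_{0≠y_h∈Y_h^opt} |b(z_h,y_h)|/(‖z_h‖_X ‖y_h‖_Y) ≥ C₁ holds with the same constant. In fact, for each z_h ∈ X_h, sup over Y_h^opt of |b(z_h,·)|/‖·‖_Y equals the sup over all of Y. -/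
/-!
By the Riesz representation `b(z, y) = ⟪y, T z⟫`, Cauchy–Schwarz bounds `|b(z, y)| / ‖y‖` by
`‖T z‖`, with equality at `y = T z`. For `z ∈ X_h` this maximiser lies in `Y_h^opt = T(X_h)`,
so both suprema equal `‖T z‖`, and the continuous inf-sup bound transfers unchanged.
-/

open scoped InnerProductSpace

section SupInner

variable {𝕜 E : Type*} [RCLike 𝕜] [NormedAddCommGroup E] [InnerProductSpace 𝕜 E]

theorem norm_inner_div_norm_le (y v : E) : ‖⟪y, v⟫_𝕜‖ / ‖y‖ ≤ ‖v‖ :=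
  div_le_of_le_mul₀ (norm_nonneg y) (norm_nonneg v) <|
    (norm_inner_le_norm y v).trans_eq (mul_comm _ _)

theorem norm_inner_self_div_norm (v : E) : ‖⟪v, v⟫_𝕜‖ / ‖v‖ = ‖v‖ := by
  rcases eq_or_ne v 0 with rfl | hv
  · simp
  · rw [← inner_self_re_eq_norm, inner_self_eq_norm_mul_norm,
      mul_div_cancel_right₀ _ (norm_ne_zero_iff.mpr hv)]

theorem ciSup_norm_inner_div_norm_eq {ι : Type*} (f : ι → E) {v : E} (hv : v ∈ Set.range f) :
    ⨆ i, ‖⟪f i, v⟫_𝕜‖ / ‖f i‖ = ‖v‖ := by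
  obtain ⟨i₀, rfl⟩ := hv
  have : Nonempty ι := ⟨i₀⟩
  refine le_antisymm (ciSup_le fun i => norm_inner_div_norm_le _ _) ?_
  calc ‖f i₀‖ = ‖⟪f i₀, f i₀⟫_𝕜‖ / ‖f i₀‖ := (norm_inner_self_div_norm _).symm
    _ ≤ ⨆ i, ‖⟪f i, f i₀⟫_𝕜‖ / ‖f i‖ :=
      le_ciSup (f := fun i => ‖⟪f i, f i₀⟫_𝕜‖ / ‖f i‖)
        ⟨_, Set.forall_mem_range.mpr fun i => norm_inner_div_norm_le _ _⟩ i₀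

end SupInner

theorem stmt_1_general
    {X Y : Type*} [NormedAddCommGroup X] [InnerProductSpace ℂ X]
    [NormedAddCommGroup Y] [InnerProductSpace ℂ Y]
    (b : X →L[ℂ] Y →L⋆[ℂ] ℂ) (T : X → Y)
    (hT : ∀ z y, (inner ℂ y (T z) : ℂ) = b z y)
    (Xh : Submodule ℂ X)
    (C₁ : ℝ)
    (hinfsup : ∀ z : X, C₁ * ‖z‖ ≤ ⨆ y : Y, ‖b z y‖ / ‖y‖) :
    ∀ zh ∈ Xh,
      (⨆ yh : (T '' (Xh : Set X) : Set Y), ‖b zh (yh : Y)‖ / ‖(yh : Y)‖)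
        = (⨆ y : Y, ‖b zh y‖ / ‖y‖) ∧
      C₁ * ‖zh‖ ≤ ⨆ yh : (T '' (Xh : Set X) : Set Y), ‖b zh (yh : Y)‖ / ‖(yh : Y)‖ := by
  intro zh hzh
  simp_rw [← hT] at hinfsup ⊢
  have hsupY : ⨆ y : Y, ‖⟪y, T zh⟫_ℂ‖ / ‖y‖ = ‖T zh‖ :=
    ciSup_norm_inner_div_norm_eq id ⟨T zh, rfl⟩
  have hsupH : ⨆ yh : (T '' (Xh : Set X) : Set Y), ‖⟪(yh : Y), T zh⟫_ℂ‖ / ‖(yh : Y)‖ = ‖T zh‖ :=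
    ciSup_norm_inner_div_norm_eq Subtype.val ⟨⟨T zh, zh, hzh, rfl⟩, rfl⟩
  rw [hsupH, hsupY]
  exact ⟨rfl, hsupY ▸ hinfsup zh⟩

/-- If the inf-sup condition holds with constant `C₁`, then for the optimal test space
`Y_h^opt = T(X_h)` the discrete inf-sup condition holds with the same constant; in fact,
for every `z_h ∈ X_h` the sup of `|b(z_h,·)|/‖·‖` over `Y_h^opt` equals the sup over `Y`. -/
theorem stmt_1
    {X Y : Type*} [NormedAddCommGroup X] [InnerProductSpace ℂ X] [CompleteSpace X]
    [NormedAddCommGroup Y] [InnerProductSpace ℂ Y] [CompleteSpace Y]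
    (b : X →L[ℂ] Y →L⋆[ℂ] ℂ) (T : X → Y)
    (hT : ∀ z y, (inner ℂ y (T z) : ℂ) = b z y)
    (Xh : Submodule ℂ X) (hXh : FiniteDimensional ℂ Xh)
    (C₁ : ℝ) (hC₁ : 0 < C₁)
    (hinfsup : ∀ z : X, C₁ * ‖z‖ ≤ ⨆ y : Y, ‖b z y‖ / ‖y‖) :
    ∀ zh ∈ Xh,
      (⨆ yh : (T '' (Xh : Set X) : Set Y), ‖b zh (yh : Y)‖ / ‖(yh : Y)‖)
        = (⨆ y : Y, ‖b zh y‖ / ‖y‖) ∧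
      C₁ * ‖zh‖ ≤ ⨆ yh : (T '' (Xh : Set X) : Set Y), ‖b zh (yh : Y)‖ / ‖(yh : Y)‖ :=
  stmt_1_general b T hT Xh C₁ hinfsup
end

section
/- Let X be a Banach space and Y a reflexive Banach space, and b : X × Y → ℂ a continuous sesquilinear form. If {z ∈ X : b(z,y)=0 ∀y∈Y} = {0} and inf_{0≠y∈Y} sup_{0≠z∈X} |b(z,y)|/(‖y‖_Y ‖z‖_X) ≥ C₁, then {y ∈ Y : b(z,y)=0 ∀z∈X} = {0} and inf_{0≠z∈X} sup_{0≠y∈Y} |b(z,y)|/(‖z‖_X ‖y‖_Y) ≥ C₁, with the same constant C₁. -/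
/-
Let `B z := b z`, a map from `X` into the antidual of `Y`. By reflexivity of `Y` every functional
on the antidual is evaluation at some `y`, so the inf-sup condition on `Y` says exactly that the
adjoint of `B` is bounded below by `C₁`. Hahn–Banach then makes the image under `B` of the unit
ball of `X` dense in the `C₁`-ball, and, `X` being complete, the successive approximation scheme
of the open mapping theorem turns this into exact preimages of every `g`, of norm at most
`C₁⁻¹ ‖g‖ / (1 - δ)` for any `δ > 0`. Since `B` is injective, the preimage of `B z` is `z`
itself, whence `C₁ ‖z‖ ≤ ‖B z‖`.
-/

open Metric Filter Topology RCLike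

section OperatorNorm

variable {𝕜 𝕜₂ E F : Type*} [NontriviallyNormedField 𝕜] [NontriviallyNormedField 𝕜₂]
  {σ : 𝕜 →+* 𝕜₂} [RingHomIsometric σ] [NormedAddCommGroup E] [NormedSpace 𝕜 E]
  [NormedAddCommGroup F] [NormedSpace 𝕜₂ F]

theorem ContinuousLinearMap.iSup_norm_apply_div_norm (f : E →SL[σ] F) :
    ⨆ x, ‖f x‖ / ‖x‖ = ‖f‖ := by
  have hle : ∀ x, ‖f x‖ / ‖x‖ ≤ ‖f‖ := fun x => div_le_of_le_mul₀ (norm_nonneg _)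
    (norm_nonneg _) (f.le_opNorm x)
  refine le_antisymm (ciSup_le hle) (f.opNorm_le_bound (Real.iSup_nonneg fun _ => by positivity)
    fun x => ?_)
  rcases eq_or_ne x 0 with rfl | hx
  · simp
  · exact (div_le_iff₀ (norm_pos_iff.2 hx)).1 (le_ciSup ⟨‖f‖, Set.forall_mem_range.2 hle⟩ x)

end OperatorNorm

section Iteration

variable {𝕜 E F : Type*} [NontriviallyNormedField 𝕜] [NormedAddCommGroup E] [NormedSpace 𝕜 E]
  [CompleteSpace E] [NormedAddCommGroup F] [NormedSpace 𝕜 F]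

theorem ContinuousLinearMap.exists_preimage_norm_le_of_forall_approx (f : E →L[𝕜] F) {K δ : ℝ}
    (hK : 0 ≤ K) (hδ₀ : 0 ≤ δ) (hδ₁ : δ < 1)
    (happrox : ∀ y, ∃ x, ‖x‖ ≤ K * ‖y‖ ∧ ‖y - f x‖ ≤ δ * ‖y‖) (y : F) :
    ∃ x, f x = y ∧ ‖x‖ ≤ K / (1 - δ) * ‖y‖ := by
  choose g hg_norm hg_approx using happrox
  set r : F → F := fun y => y - f (g y)
  have hr : ∀ n, ‖r^[n] y‖ ≤ δ ^ n * ‖y‖ := by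
    intro n
    induction n with
    | zero => simp
    | succ n ih =>
      rw [Function.iterate_succ_apply', pow_succ', mul_assoc]
      exact (hg_approx _).trans (by gcongr)
  set u : ℕ → E := fun n => g (r^[n] y)
  have hu : ∀ n, ‖u n‖ ≤ K * ‖y‖ * δ ^ n := fun n => calc
    ‖u n‖ ≤ K * ‖r^[n] y‖ := hg_norm _
    _ ≤ K * (δ ^ n * ‖y‖) := by gcongr; exact hr n
    _ = K * ‖y‖ * δ ^ n := by ring
  have hgeom : Summable fun n => K * ‖y‖ * δ ^ n :=
    (summable_geometric_of_lt_one hδ₀ hδ₁).mul_left _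
  have hsum : Summable fun n => ‖u n‖ := hgeom.of_nonneg_of_le (fun _ => norm_nonneg _) hu
  have hpartial : ∀ n, f (∑ i ∈ Finset.range n, u i) = y - r^[n] y := by
    intro n
    induction n with
    | zero => simp
    | succ n ih =>
      rw [Finset.sum_range_succ, map_add, ih, Function.iterate_succ_apply']
      simp only [r, u]
      abel
  have hres : Tendsto (fun n => r^[n] y) atTop (𝓝 0) := by
    refine squeeze_zero_norm hr ?_
    simpa using (tendsto_pow_atTop_nhds_zero_of_lt_one hδ₀ hδ₁).mul_const ‖y‖
  refine ⟨∑' n, u n, tendsto_nhds_unique (hsum.of_norm.hasSum.mapL f).tendsto_sum_nat ?_, ?_⟩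
  · simpa only [← map_sum, hpartial, sub_zero] using hres.const_sub y
  · calc ‖∑' n, u n‖ ≤ ∑' n, ‖u n‖ := norm_tsum_le_tsum_norm hsum
      _ ≤ ∑' n, K * ‖y‖ * δ ^ n := hsum.tsum_le_tsum hu hgeom
      _ = K / (1 - δ) * ‖y‖ := by
        rw [tsum_mul_left, tsum_geometric_of_lt_one hδ₀ hδ₁]
        ring

end Iteration

section RCLike

variable {𝕜 E G : Type*} [RCLike 𝕜] [NormedAddCommGroup E] [NormedSpace 𝕜 E]
  [NormedAddCommGroup G] [NormedSpace 𝕜 G]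

theorem ContinuousLinearMap.norm_le_of_forall_re_apply_le (ψ : StrongDual 𝕜 E) {u : ℝ}
    (h : ∀ x ∈ closedBall (0 : E) 1, re (ψ x) ≤ u) : ‖ψ‖ ≤ u := by
  rw [← ψ.sSup_unitClosedBall_eq_norm]
  refine csSup_le ((nonempty_closedBall.2 zero_le_one).image _) ?_
  rintro _ ⟨x, hx, rfl⟩
  obtain ⟨c, hc, hcx⟩ := exists_norm_eq_mul_self (ψ x)
  have hcx' : c • x ∈ closedBall (0 : E) 1 := by simpa [norm_smul, hc] using hx
  simpa [← hcx] using h _ hcx'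

theorem ContinuousLinearMap.closedBall_subset_closure_image_closedBall (T : E →L[𝕜] G) {C : ℝ}
    (hT : ∀ ψ : StrongDual 𝕜 G, C * ‖ψ‖ ≤ ‖ψ ∘L T‖) :
    closedBall (0 : G) C ⊆ closure (T '' closedBall 0 1) := by
  intro g hg
  by_contra hgT
  let _ : NormedSpace ℝ E := NormedSpace.restrictScalars ℝ 𝕜 E
  let _ : NormedSpace ℝ G := NormedSpace.restrictScalars ℝ 𝕜 G
  have hconv : Convex ℝ (closure (T '' closedBall (0 : E) 1)) :=
    ((convex_closedBall (0 : E) 1).linear_image (T.toLinearMap.restrictScalars ℝ)).closure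
  obtain ⟨ψ, u, hψT, hψg⟩ :=
    RCLike.geometric_hahn_banach_closed_point (𝕜 := 𝕜) hconv isClosed_closure hgT
  have hψT' : ‖ψ ∘L T‖ ≤ u := (ψ ∘L T).norm_le_of_forall_re_apply_le fun x hx =>
    (hψT _ (subset_closure ⟨x, hx, rfl⟩)).le
  have hψg' : re (ψ g) ≤ ‖ψ‖ * C := calc
    re (ψ g) ≤ ‖ψ g‖ := re_le_norm _
    _ ≤ ‖ψ‖ * ‖g‖ := ψ.le_opNorm g
    _ ≤ ‖ψ‖ * C := by gcongr; simpa using hg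
  linarith [hT ψ]

theorem ContinuousLinearMap.exists_approx_preimage_of_closedBall_subset (T : E →L[𝕜] G)
    {C δ : ℝ} (hC : 0 < C) (hδ : 0 < δ) (hT : closedBall (0 : G) C ⊆ closure (T '' closedBall 0 1))
    (y : G) : ∃ x, ‖x‖ ≤ C⁻¹ * ‖y‖ ∧ ‖y - T x‖ ≤ δ * ‖y‖ := by
  rcases eq_or_ne y 0 with rfl | hy
  · exact ⟨0, by simp⟩
  set s : ℝ := C⁻¹ * ‖y‖
  have hs : 0 < s := by have := norm_pos_iff.2 hy; positivity
  have hys : ((s : 𝕜)⁻¹ • y) ∈ closedBall (0 : G) C := by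
    have : s⁻¹ * ‖y‖ = C := by simp only [s]; field_simp
    simp [norm_smul, abs_of_pos hs, this]
  obtain ⟨_, ⟨x, hx, rfl⟩, hdist⟩ := mem_closure_iff.1 (hT hys) (δ * C) (by positivity)
  refine ⟨(s : 𝕜) • x, ?_, ?_⟩
  · simpa [norm_smul, abs_of_pos hs] using
      mul_le_mul_of_nonneg_left (mem_closedBall_zero_iff.1 hx) hs.le
  · have : y - T ((s : 𝕜) • x) = (s : 𝕜) • ((s : 𝕜)⁻¹ • y - T x) := by
      rw [smul_sub, smul_inv_smul₀ (by exact_mod_cast hs.ne'), map_smul]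
    calc ‖y - T ((s : 𝕜) • x)‖ = s * dist ((s : 𝕜)⁻¹ • y) (T x) := by
          rw [this, norm_smul, norm_ofReal, abs_of_pos hs, dist_eq_norm]
      _ ≤ s * (δ * C) := by gcongr
      _ = δ * ‖y‖ := by simp only [s]; field_simp

theorem ContinuousLinearMap.mul_norm_le_norm_apply_of_injective [CompleteSpace E] (T : E →L[𝕜] G)
    (hinj : Function.Injective T) {C : ℝ} (hC : 0 < C)
    (hT : ∀ ψ : StrongDual 𝕜 G, C * ‖ψ‖ ≤ ‖ψ ∘L T‖) (x : E) : C * ‖x‖ ≤ ‖T x‖ := by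
  have hball := T.closedBall_subset_closure_image_closedBall hT
  have hδ : ∀ δ ∈ Set.Ioo (0 : ℝ) 1, (1 - δ) * (C * ‖x‖) ≤ ‖T x‖ := by
    rintro δ ⟨hδ₀, hδ₁⟩
    obtain ⟨x', hx'T, hx'⟩ := T.exists_preimage_norm_le_of_forall_approx (inv_nonneg.2 hC.le)
      hδ₀.le hδ₁ (T.exists_approx_preimage_of_closedBall_subset hC hδ₀ hball) (T x)
    rw [hinj hx'T, div_mul_eq_mul_div, le_div_iff₀ (by linarith)] at hx'
    calc (1 - δ) * (C * ‖x‖) = C * (‖x‖ * (1 - δ)) := by ring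
      _ ≤ C * (C⁻¹ * ‖T x‖) := by gcongr
      _ = ‖T x‖ := by field_simp
  have hlim : Tendsto (fun δ : ℝ => (1 - δ) * (C * ‖x‖)) (𝓝[>] 0) (𝓝 (C * ‖x‖)) := by
    have : Tendsto (fun δ : ℝ => (1 - δ) * (C * ‖x‖)) (𝓝 0) (𝓝 ((1 - 0) * (C * ‖x‖))) :=
      (continuous_const.sub continuous_id).mul continuous_const |>.tendsto 0
    simpa using this.mono_left nhdsWithin_le_nhds
  exact le_of_tendsto hlim (eventually_of_mem (Ioo_mem_nhdsGT one_pos) hδ)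

end RCLike

section Antidual

variable {X Y : Type*} [NormedAddCommGroup X] [NormedSpace ℂ X] [NormedAddCommGroup Y]
  [NormedSpace ℂ Y]

theorem exists_forall_apply_eq_of_surjective_inclusionInDoubleDual
    (hrefl : Function.Surjective (NormedSpace.inclusionInDoubleDual ℂ Y))
    (ψ : StrongDual ℂ (Y →L⋆[ℂ] ℂ)) : ∃ y : Y, ∀ g : Y →L⋆[ℂ] ℂ, ψ g = g y := by
  set conj : ℂ →L⋆[ℂ] ℂ := (starL ℂ : ℂ ≃L⋆[ℂ] ℂ).toContinuousLinearMap
  obtain ⟨y, hy⟩ := hrefl <|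
    conj.comp (ψ.comp (ContinuousLinearMap.compSL Y ℂ ℂ (RingHom.id ℂ) (starRingEnd ℂ) conj))
  refine ⟨y, fun g => ?_⟩
  have hconj : conj.comp (conj.comp g) = g := by ext; simp [conj]
  have hstar : conj (ψ g) = conj (g y) := by simpa [hconj] using congr($hy (conj.comp g)).symm
  exact (starL ℂ).injective hstar

theorem mul_norm_le_norm_comp_of_surjective_inclusionInDoubleDual
    (hrefl : Function.Surjective (NormedSpace.inclusionInDoubleDual ℂ Y))
    (b : X →L[ℂ] Y →L⋆[ℂ] ℂ) {C : ℝ} (hC : 0 ≤ C) (hb : ∀ y, C * ‖y‖ ≤ ‖b.flip y‖)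
    (ψ : StrongDual ℂ (Y →L⋆[ℂ] ℂ)) : C * ‖ψ‖ ≤ ‖ψ ∘L b‖ := by
  obtain ⟨y, hy⟩ := exists_forall_apply_eq_of_surjective_inclusionInDoubleDual hrefl ψ
  have hψ : ‖ψ‖ ≤ ‖y‖ := ψ.opNorm_le_bound (norm_nonneg y) fun g => by
    rw [hy, mul_comm]; exact g.le_opNorm y
  have hψb : ψ ∘L b = b.flip y := by ext z; simp [hy]
  calc C * ‖ψ‖ ≤ C * ‖y‖ := by gcongr
    _ ≤ ‖ψ ∘L b‖ := hψb ▸ hb y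

end Antidual

theorem stmt_4_general
    {X Y : Type*} [NormedAddCommGroup X] [NormedSpace ℂ X] [CompleteSpace X]
    [NormedAddCommGroup Y] [NormedSpace ℂ Y]
    (hrefl : Function.Surjective (NormedSpace.inclusionInDoubleDual ℂ Y))
    (b : X →L[ℂ] Y →L⋆[ℂ] ℂ) (C₁ : ℝ) (hC₁ : 0 < C₁)
    (huniq : ∀ z : X, (∀ y : Y, b z y = 0) → z = 0)
    (hinfsup : ∀ y : Y, C₁ * ‖y‖ ≤ ⨆ z : X, ‖b z y‖ / ‖z‖) :
    (∀ y : Y, (∀ z : X, b z y = 0) → y = 0) ∧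
    (∀ z : X, C₁ * ‖z‖ ≤ ⨆ y : Y, ‖b z y‖ / ‖y‖) := by
  have hflip : ∀ y, C₁ * ‖y‖ ≤ ‖b.flip y‖ := fun y =>
    (hinfsup y).trans_eq (b.flip y).iSup_norm_apply_div_norm
  refine ⟨fun y hy => ?_, fun z => ?_⟩
  · have h := hflip y
    rw [show b.flip y = 0 from ContinuousLinearMap.ext hy, norm_zero] at h
    exact norm_le_zero_iff.1 (nonpos_of_mul_nonpos_right h hC₁)
  · have hinj : Function.Injective b := (injective_iff_map_eq_zero b).2 fun z hz =>
      huniq z fun y => by simp [hz]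
    rw [(b z).iSup_norm_apply_div_norm]
    exact b.mul_norm_le_norm_apply_of_injective hinj hC₁
      (mul_norm_le_norm_comp_of_surjective_inclusionInDoubleDual hrefl b hC₁.le hflip) z

/-- (Exercise on inf-sup constants.) Let `X` be a Banach space and `Y` a reflexive Banach
space, `b` a continuous sesquilinear form on `X × Y`. If `{z : b(z,y)=0 ∀y} = {0}` and the
test-side inf-sup condition holds with constant `C₁`, then `{y : b(z,y)=0 ∀z} = {0}` and the
trial-side inf-sup condition holds with the same constant `C₁`. -/
theorem stmt_4
    {X Y : Type*} [NormedAddCommGroup X] [NormedSpace ℂ X] [CompleteSpace X]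
    [NormedAddCommGroup Y] [NormedSpace ℂ Y] [CompleteSpace Y]
    (hrefl : Function.Surjective (NormedSpace.inclusionInDoubleDual ℂ Y))
    (b : X →L[ℂ] Y →L⋆[ℂ] ℂ) (C₁ : ℝ) (hC₁ : 0 < C₁)
    (huniq : ∀ z : X, (∀ y : Y, b z y = 0) → z = 0)
    (hinfsup : ∀ y : Y, C₁ * ‖y‖ ≤ ⨆ z : X, ‖b z y‖ / ‖z‖) :
    (∀ y : Y, (∀ z : X, b z y = 0) → y = 0) ∧
    (∀ z : X, C₁ * ‖z‖ ≤ ⨆ y : Y, ‖b z y‖ / ‖y‖) :=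
  stmt_4_general hrefl b C₁ hC₁ huniq hinfsup
end

section
/- Under Assumption (well-posedness): {z ∈ X : b(z,y)=0 ∀y} = {0} and C₁‖y‖_Y ≤ sup_{0≠z∈X} |b(z,y)|/‖z‖_X ≤ C₂‖y‖_Y for all y∈Y, the energy norm satisfies C₁‖z‖_X ≤ |||z|||_X ≤ C₂‖z‖_X for all z ∈ X, where |||z|||_X = ‖Tz‖_Y = sup_{0≠y∈Y} |b(z,y)|/‖y‖_Y. -/
/-!
Let `A : X →L Y` be the bounded operator behind `T`. The inf-sup condition says that the adjoint
`A†`, which represents `b(·, y)` in `X`, is bounded below by `C₁`, and uniqueness says `A` is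
injective. Hence `A†` has closed range with trivial orthogonal complement `ker A`, so it is onto.
Writing `z = A† y` with `C₁ ‖y‖ ≤ ‖z‖` gives `‖z‖² = ⟪y, A z⟫ ≤ ‖y‖ ‖A z‖ ≤ ‖z‖ ‖A z‖ / C₁`.
The upper bound follows from `‖T z‖² = b(z, T z)` and the upper inf-sup bound at `y = T z`.
-/

open scoped InnerProductSpace InnerProduct
open ContinuousLinearMap

section

variable {𝕜 X Y : Type*} [RCLike 𝕜] [NormedAddCommGroup X] [InnerProductSpace 𝕜 X]
  [NormedAddCommGroup Y] [InnerProductSpace 𝕜 Y]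

namespace ContinuousLinearMap

variable [CompleteSpace X] [CompleteSpace Y]

theorem range_adjoint_eq_top_of_injective (A : X →L[𝕜] Y) (hA : Function.Injective A)
    {C : ℝ} (hC : 0 < C) (hbelow : ∀ y, C * ‖y‖ ≤ ‖(A†) y‖) : (A† : Y →ₗ[𝕜] X).range = ⊤ := by
  have hanti : AntilipschitzWith (Real.toNNReal C⁻¹) (A†) :=
    (A†).antilipschitz_of_bound fun y => by
      rw [Real.coe_toNNReal _ (inv_nonneg.mpr hC.le), inv_mul_eq_div, le_div_iff₀ hC, mul_comm]
      exact hbelow y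
  have hclosed : IsClosed ((A† : Y →ₗ[𝕜] X).range : Set X) := by
    rw [LinearMap.coe_range]
    exact hanti.isClosed_range (A†).uniformContinuous
  have := hclosed.completeSpace_coe
  rw [← Submodule.orthogonal_eq_bot_iff, orthogonal_range, adjoint_adjoint,
    LinearMap.ker_eq_bot]
  exact hA

theorem mul_norm_le_norm_apply_of_adjoint (A : X →L[𝕜] Y) (hA : Function.Injective A)
    {C : ℝ} (hC : 0 < C) (hbelow : ∀ y, C * ‖y‖ ≤ ‖(A†) y‖) (x : X) : C * ‖x‖ ≤ ‖A x‖ := by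
  obtain ⟨y, hx⟩ :=
    LinearMap.range_eq_top.mp (range_adjoint_eq_top_of_injective A hA hC hbelow) x
  have hsq : ‖x‖ ^ 2 ≤ ‖y‖ * ‖A x‖ := by
    calc ‖x‖ ^ 2 = ‖⟪x, x⟫_𝕜‖ := by simp [inner_self_eq_norm_sq_to_K]
      _ = ‖⟪y, A x⟫_𝕜‖ := by rw [← hx, coe_coe, adjoint_inner_left]
      _ ≤ ‖y‖ * ‖A x‖ := norm_inner_le_norm _ _
  rcases (norm_nonneg x).eq_or_lt with h0 | hpos
  · rw [← h0, mul_zero]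
    exact norm_nonneg _
  refine le_of_mul_le_mul_right ?_ hpos
  calc C * ‖x‖ * ‖x‖ = C * ‖x‖ ^ 2 := by ring
    _ ≤ C * ‖y‖ * ‖A x‖ := by rw [mul_assoc]; gcongr
    _ ≤ ‖x‖ * ‖A x‖ := by gcongr; exact hx ▸ hbelow y
    _ = ‖A x‖ * ‖x‖ := mul_comm _ _

end ContinuousLinearMap

section TrialToTest

variable (b : X →L[𝕜] Y →L⋆[𝕜] 𝕜) {T : X → Y}

theorem bddAbove_range_norm_apply_div_norm (y : Y) :
    BddAbove (Set.range fun z => ‖b z y‖ / ‖z‖) := by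
  refine ⟨‖b‖ * ‖y‖, ?_⟩
  rintro _ ⟨z, rfl⟩
  rcases eq_or_ne z 0 with rfl | hz
  · simpa using mul_nonneg (norm_nonneg b) (norm_nonneg y)
  rw [div_le_iff₀ (norm_pos_iff.mpr hz), mul_right_comm]
  exact b.le_opNorm₂ z y

variable {b} (hT : ∀ z y, ⟪y, T z⟫_𝕜 = b z y)
include hT

theorem norm_sq_eq_norm_apply_of_inner_eq (z : X) : ‖T z‖ ^ 2 = ‖b z (T z)‖ := by
  rw [← hT, inner_self_eq_norm_sq_to_K, norm_pow, RCLike.norm_ofReal, abs_norm]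

theorem norm_le_of_inner_eq {C : ℝ} (hC : 0 ≤ C) (hbound : ∀ z y, ‖b z y‖ ≤ C * ‖z‖ * ‖y‖)
    (z : X) : ‖T z‖ ≤ C * ‖z‖ := by
  rcases (norm_nonneg (T z)).eq_or_lt with h0 | hpos
  · rw [← h0]
    positivity
  refine le_of_mul_le_mul_right ?_ hpos
  rw [← sq, norm_sq_eq_norm_apply_of_inner_eq hT]
  exact hbound z (T z)

theorem exists_continuousLinearMap_of_inner_eq : ∃ A : X →L[𝕜] Y, ⇑A = T := by
  have hadd (z z' : X) : T (z + z') = T z + T z' :=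
    ext_inner_left 𝕜 fun y => by simp only [inner_add_right, hT, map_add, add_apply]
  have hsmul (c : 𝕜) (z : X) : T (c • z) = c • T z :=
    ext_inner_left 𝕜 fun y => by simp only [inner_smul_right, hT, map_smul, smul_apply, smul_eq_mul]
  let A : X →ₗ[𝕜] Y := { toFun := T, map_add' := hadd, map_smul' := hsmul }
  exact ⟨A.mkContinuous ‖b‖ (norm_le_of_inner_eq hT (norm_nonneg b) b.le_opNorm₂), rfl⟩

theorem norm_le_of_iSup_le {C : ℝ} (hC : 0 ≤ C)
    (hup : ∀ y, (⨆ z, ‖b z y‖ / ‖z‖) ≤ C * ‖y‖) (z : X) : ‖T z‖ ≤ C * ‖z‖ := by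
  refine norm_le_of_inner_eq hT hC (fun z y => ?_) z
  rcases eq_or_ne z 0 with rfl | hz
  · simp
  have := (le_ciSup (bddAbove_range_norm_apply_div_norm b y) z).trans (hup y)
  rwa [div_le_iff₀ (norm_pos_iff.mpr hz), mul_right_comm] at this

variable [CompleteSpace X] [CompleteSpace Y]

theorem mul_norm_le_of_le_iSup {C : ℝ} (hC : 0 < C)
    (huniq : ∀ z, (∀ y, b z y = 0) → z = 0)
    (hlow : ∀ y, C * ‖y‖ ≤ ⨆ z, ‖b z y‖ / ‖z‖) (z : X) : C * ‖z‖ ≤ ‖T z‖ := by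
  obtain ⟨A, rfl⟩ := exists_continuousLinearMap_of_inner_eq hT
  have hinj : Function.Injective A := (injective_iff_map_eq_zero A).mpr fun z hz =>
    huniq z fun y => by rw [← hT, hz, inner_zero_right]
  refine A.mul_norm_le_norm_apply_of_adjoint hinj hC (fun y => (hlow y).trans ?_) z
  refine ciSup_le fun z => div_le_of_le_mul₀ (norm_nonneg z) (norm_nonneg _) ?_
  rw [← hT, ← adjoint_inner_left]
  exact norm_inner_le_norm _ _

end TrialToTest

end

/-- Under the well-posedness assumption (uniqueness on the trial side and two-sided
test-side bounds with constants `C₁, C₂`), the energy norm `|||z||| = ‖T z‖_Y` satisfies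
`C₁ ‖z‖_X ≤ |||z||| ≤ C₂ ‖z‖_X` for all `z ∈ X`. -/
theorem stmt_5
    {X Y : Type*} [NormedAddCommGroup X] [InnerProductSpace ℂ X] [CompleteSpace X]
    [NormedAddCommGroup Y] [InnerProductSpace ℂ Y] [CompleteSpace Y]
    (b : X →L[ℂ] Y →L⋆[ℂ] ℂ) (T : X → Y)
    (hT : ∀ z y, (inner ℂ y (T z) : ℂ) = b z y)
    (C₁ C₂ : ℝ) (hC₁ : 0 < C₁) (hC₂ : 0 < C₂)
    (huniq : ∀ z : X, (∀ y : Y, b z y = 0) → z = 0)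
    (hlow : ∀ y : Y, C₁ * ‖y‖ ≤ ⨆ z : X, ‖b z y‖ / ‖z‖)
    (hup : ∀ y : Y, (⨆ z : X, ‖b z y‖ / ‖z‖) ≤ C₂ * ‖y‖) :
    ∀ z : X, C₁ * ‖z‖ ≤ ‖T z‖ ∧ ‖T z‖ ≤ C₂ * ‖z‖ := fun z =>
  ⟨mul_norm_le_of_le_iSup hT hC₁ huniq hlow z, norm_le_of_iSup_le hT hC₂.le hup z⟩
end

section
/- Let x solve b(x,y)=ℓ(y) for all y∈Y. Then x_h ∈ X_h solves the ideal PG method b(x_h,y_h)=ℓ(y_h) for all y_h ∈ T(X_h) if and only if x_h is the best approximation to x from X_h in the energy norm |||·|||_X = ‖T·‖_Y, i.e., |||x − x_h|||_X = inf_{z_h∈X_h} |||x − z_h|||_X. -/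
/-!
The ideal Petrov–Galerkin equations say that the Galerkin error `x - xₕ` is `b`-orthogonal to
the optimal test space `T(Xₕ)`. Since `b z y = ⟪y, T z⟫`, this is the orthogonality
`⟪T zₕ, T (x - xₕ)⟫ = 0` for all `zₕ ∈ Xₕ`, i.e. `T xₕ` is the orthogonal projection of `T x`
onto `T(Xₕ)`. By the characterization of minimizers of the distance to a subspace, this is
exactly the statement that `xₕ` minimizes `‖T (x - ·)‖` over `Xₕ`.
-/

open scoped InnerProductSpace

theorem Function.Surjective.ciInf_comp {α : Type*} [InfSet α] {ι ι' : Sort*} {f : ι → ι'}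
    (hf : Function.Surjective f) (g : ι' → α) : ⨅ i, g (f i) = ⨅ j, g j := by
  simp only [iInf, ← hf.range_comp]
  rfl

section

variable {𝕜 E F : Type*} [RCLike 𝕜] [NormedAddCommGroup E] [InnerProductSpace 𝕜 E]
  [NormedAddCommGroup F] [InnerProductSpace 𝕜 F]

theorem LinearMap.norm_map_sub_eq_iInf_iff_inner_eq_zero (A : E →ₗ[𝕜] F) {K : Submodule 𝕜 E}
    (x : E) {xh : E} (hxh : xh ∈ K) :
    ‖A (x - xh)‖ = ⨅ z : K, ‖A (x - z)‖ ↔ ∀ z ∈ K, ⟪A z, A (x - xh)⟫_𝕜 = 0 := by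
  have hinf : ⨅ z : K, ‖A (x - z)‖ = ⨅ w : K.map A, ‖A x - w‖ := by
    simp only [map_sub, ← A.submoduleMap_coe_apply]
    exact (A.submoduleMap_surjective K).ciInf_comp fun w => ‖A x - w‖
  rw [hinf, map_sub, Submodule.norm_eq_iInf_iff_inner_eq_zero _ (Submodule.mem_map_of_mem hxh)]
  simp only [Submodule.mem_map, forall_exists_index, and_imp, forall_apply_eq_imp_iff₂]
  exact forall₂_congr fun _ _ => inner_eq_zero_symm

def trialToTest (b : E →L[𝕜] F →L⋆[𝕜] 𝕜) (T : E → F) (hT : ∀ z y, ⟪y, T z⟫_𝕜 = b z y) :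
    E →ₗ[𝕜] F where
  toFun := T
  map_add' z w := ext_inner_left 𝕜 fun y => by
    rw [inner_add_right, hT, hT, hT, map_add, add_apply]
  map_smul' c z := ext_inner_left 𝕜 fun y => by
    rw [inner_smul_right, hT, hT, map_smul, smul_apply, smul_eq_mul,
      RingHom.id_apply]

end

theorem stmt_7_general
    {X Y : Type*} [NormedAddCommGroup X] [InnerProductSpace ℂ X]
    [NormedAddCommGroup Y] [InnerProductSpace ℂ Y]
    (b : X →L[ℂ] Y →L⋆[ℂ] ℂ) (T : X → Y)
    (hT : ∀ z y, (inner ℂ y (T z) : ℂ) = b z y)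
    (Xh : Submodule ℂ X)
    (ℓ : Y →L⋆[ℂ] ℂ) (x : X) (hx : ∀ y : Y, b x y = ℓ y)
    (xh : X) (hxh : xh ∈ Xh) :
    (∀ z ∈ Xh, b xh (T z) = ℓ (T z)) ↔
      ‖T (x - xh)‖ = ⨅ zh : Xh, ‖T (x - (zh : X))‖ := by
  refine Iff.trans (forall₂_congr fun z _ => ?_)
    ((trialToTest b T hT).norm_map_sub_eq_iInf_iff_inner_eq_zero x hxh).symm
  change _ ↔ ⟪T z, T (x - xh)⟫_ℂ = 0
  rw [hT, map_sub, sub_apply, hx, sub_eq_zero, eq_comm]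

/-- Let `x` solve `b(x,y) = ℓ(y)` for all `y ∈ Y`. Then `x_h ∈ X_h` solves the ideal PG
method with optimal test space `T(X_h)` if and only if `x_h` is the best approximation to
`x` from `X_h` in the energy norm `|||z||| = ‖T z‖_Y`. -/
theorem stmt_7
    {X Y : Type*} [NormedAddCommGroup X] [InnerProductSpace ℂ X] [CompleteSpace X]
    [NormedAddCommGroup Y] [InnerProductSpace ℂ Y] [CompleteSpace Y]
    (b : X →L[ℂ] Y →L⋆[ℂ] ℂ) (T : X → Y)
    (hT : ∀ z y, (inner ℂ y (T z) : ℂ) = b z y)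
    (C₁ C₂ : ℝ) (hC₁ : 0 < C₁) (hC₂ : 0 < C₂)
    (huniq : ∀ z : X, (∀ y : Y, b z y = 0) → z = 0)
    (hlow : ∀ y : Y, C₁ * ‖y‖ ≤ ⨆ z : X, ‖b z y‖ / ‖z‖)
    (hcont : ∀ (z : X) (y : Y), ‖b z y‖ ≤ C₂ * ‖z‖ * ‖y‖)
    (Xh : Submodule ℂ X) (hXh : FiniteDimensional ℂ Xh)
    (ℓ : Y →L⋆[ℂ] ℂ) (x : X) (hx : ∀ y : Y, b x y = ℓ y)
    (xh : X) (hxh : xh ∈ Xh) :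
    (∀ z ∈ Xh, b xh (T z) = ℓ (T z)) ↔
      ‖T (x - xh)‖ = ⨅ zh : Xh, ‖T (x - (zh : X))‖ :=
  stmt_7_general b T hT Xh ℓ x hx xh hxh
end

section
/- x_h ∈ X_h solves the ideal PG method with optimal test space T(X_h) if and only if the pair (x_h, ε), where ε = R_Y⁻¹(ℓ − Bx_h) is the error representation function, solves the mixed formulation: (ε, y)_Y + b(x_h, y) = ℓ(y) for all y ∈ Y, and b(z_h, ε) = 0 for all z_h ∈ X_h. -/
open scoped InnerProductSpace ComplexConjugate

section ErrorRepresentation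

variable {𝕜 X Y : Type*} [RCLike 𝕜] [NormedAddCommGroup Y] [InnerProductSpace 𝕜 Y]
  {b : X → Y → 𝕜} {T : X → Y} {ℓ : Y → 𝕜} {xh : X} {ε : Y}

theorem apply_errorRepresentation_eq_conj (hT : ∀ z y, ⟪y, T z⟫_𝕜 = b z y)
    (hε : ∀ y, ⟪y, ε⟫_𝕜 = ℓ y - b xh y) (z : X) :
    b z ε = conj (ℓ (T z) - b xh (T z)) := by
  rw [← hT z ε, ← inner_conj_symm, hε (T z)]

theorem apply_errorRepresentation_eq_zero_iff (hT : ∀ z y, ⟪y, T z⟫_𝕜 = b z y)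
    (hε : ∀ y, ⟪y, ε⟫_𝕜 = ℓ y - b xh y) (z : X) :
    b z ε = 0 ↔ b xh (T z) = ℓ (T z) := by
  rw [apply_errorRepresentation_eq_conj hT hε, map_eq_zero, sub_eq_zero, eq_comm]

end ErrorRepresentation

theorem stmt_9_general
    {X Y : Type*} [NormedAddCommGroup X] [InnerProductSpace ℂ X]
    [NormedAddCommGroup Y] [InnerProductSpace ℂ Y]
    (b : X →L[ℂ] Y →L⋆[ℂ] ℂ) (T : X → Y)
    (hT : ∀ z y, (inner ℂ y (T z) : ℂ) = b z y)
    (Xh : Submodule ℂ X)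
    (ℓ : Y →L⋆[ℂ] ℂ) (xh : X)
    (ε : Y) (hε : ∀ y : Y, (inner ℂ y ε : ℂ) = ℓ y - b xh y) :
    (∀ z ∈ Xh, b xh (T z) = ℓ (T z)) ↔
      ((∀ y : Y, (inner ℂ y ε : ℂ) + b xh y = ℓ y) ∧ ∀ zh ∈ Xh, b zh ε = 0) := by
  have hmixed : ∀ y : Y, (inner ℂ y ε : ℂ) + b xh y = ℓ y := fun y => by
    rw [hε y, sub_add_cancel]
  have horth (z : X) : b z ε = 0 ↔ b xh (T z) = ℓ (T z) :=
    apply_errorRepresentation_eq_zero_iff (b := fun z y => b z y) (ℓ := fun y => ℓ y) hT hε z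
  simp only [horth]
  exact ⟨fun h => ⟨hmixed, h⟩, And.right⟩

/-- Mixed Galerkin reformulation: `x_h ∈ X_h` solves the ideal PG method with optimal test
space `T(X_h)` iff the pair `(x_h, ε)`, where `ε = R_Y⁻¹(ℓ − B x_h)` is the error
representation function (i.e. `(ε,y)_Y = ℓ(y) − b(x_h,y)` for all `y`), solves the mixed
formulation `(ε,y)_Y + b(x_h,y) = ℓ(y)` for all `y ∈ Y` and `b(z_h, ε) = 0` for all
`z_h ∈ X_h`. -/
theorem stmt_9
    {X Y : Type*} [NormedAddCommGroup X] [InnerProductSpace ℂ X] [CompleteSpace X]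
    [NormedAddCommGroup Y] [InnerProductSpace ℂ Y] [CompleteSpace Y]
    (b : X →L[ℂ] Y →L⋆[ℂ] ℂ) (T : X → Y)
    (hT : ∀ z y, (inner ℂ y (T z) : ℂ) = b z y)
    (Xh : Submodule ℂ X) (hXh : FiniteDimensional ℂ Xh)
    (ℓ : Y →L⋆[ℂ] ℂ) (xh : X) (hxh : xh ∈ Xh)
    (ε : Y) (hε : ∀ y : Y, (inner ℂ y ε : ℂ) = ℓ y - b xh y) :
    (∀ z ∈ Xh, b xh (T z) = ℓ (T z)) ↔
      ((∀ y : Y, (inner ℂ y ε : ℂ) + b xh y = ℓ y) ∧ ∀ zh ∈ Xh, b zh ε = 0) :=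
  stmt_9_general b T hT Xh ℓ xh ε hε
end

section
/- Suppose X = X₀ × X̂ with b((u,û), y) = b₀(u,y) + b̂(û,y), X_h = X_{h,0} × X̂_h, Y₀ = {y ∈ Y : b̂(û_h,y) = 0 ∀ û_h ∈ X̂_h} a closed subspace, T : X → Y with (Tz,y)_Y = b(z,y) for all y ∈ Y, and T₀ : X₀ → Y₀ with (T₀u, y)_Y = b₀(u,y) for all y ∈ Y₀. Then T₀(X_{h,0}) ⊆ T(X_h). Consequently, if (x_h, x̂_h) ∈ X_h solves b((x_h,x̂_h),y)=ℓ(y) for all y∈T(X_h), then x_h solves b₀(x_h,y)=ℓ(y) for all y∈T₀(X_{h,0}). -/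
/-!
Since a Riesz representative is unique, `T` is linear and `T (0, û)` represents `b̂ û`, so
`Y₀ = Kᗮ` for the finite-dimensional space `K = T (0 × X̂_h)`. For `u ∈ X₀`, `T₀ u - T (u, 0)`
is orthogonal to `Y₀ = Kᗮ`, hence lies in `Kᗮᗮ = K`: `T₀ u = T (u, û)` with `û ∈ X̂_h`. Testing
the hybrid equation with `T₀ u ∈ Y₀` kills the `b̂` term.
-/

open scoped InnerProductSpace

section

variable {𝕜 E F Y : Type*} [RCLike 𝕜] [NormedAddCommGroup Y] [InnerProductSpace 𝕜 Y]
  [AddCommGroup E] [Module 𝕜 E] [AddCommGroup F] [Module 𝕜 F]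

theorem isLinearMap_of_inner_eq (B : E →ₗ[𝕜] Y →L⋆[𝕜] 𝕜) {f : E → Y}
    (hf : ∀ x y, ⟪y, f x⟫_𝕜 = B x y) : IsLinearMap 𝕜 f where
  map_add x x' := ext_inner_left 𝕜 fun y => by simp only [inner_add_right, hf, map_add,
    add_apply]
  map_smul c x := ext_inner_left 𝕜 fun y => by simp only [inner_smul_right, hf, map_smul,
    smul_apply, smul_eq_mul]

theorem sub_mem_of_inner_eq_on_orthogonal {K : Submodule 𝕜 Y} [K.HasOrthogonalProjection]
    {v w : Y} (h : ∀ y ∈ Kᗮ, ⟪y, v⟫_𝕜 = ⟪y, w⟫_𝕜) : v - w ∈ K := by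
  rw [← K.orthogonal_orthogonal, Submodule.mem_orthogonal']
  intro y hy
  rw [inner_sub_left, ← inner_conj_symm, h y hy, inner_conj_symm, sub_self]

theorem exists_mem_apply_eq_of_inner_eq_on_orthogonal (L : E × F →ₗ[𝕜] Y) (S : Submodule 𝕜 F)
    [FiniteDimensional 𝕜 S] (u : E) {v : Y}
    (h : ∀ y ∈ (S.map (L ∘ₗ LinearMap.inr 𝕜 E F))ᗮ, ⟪y, v⟫_𝕜 = ⟪y, L (u, 0)⟫_𝕜) :
    ∃ û ∈ S, L (u, û) = v := by
  obtain ⟨û, hû, hL⟩ := sub_mem_of_inner_eq_on_orthogonal h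
  refine ⟨û, hû, ?_⟩
  rw [LinearMap.comp_apply, LinearMap.inr_apply] at hL
  calc L (u, û) = L (u, 0) + L (0, û) := by rw [← map_add, Prod.mk_add_mk, add_zero, zero_add]
    _ = v := by rw [hL, add_sub_cancel]

end

theorem stmt_11_general
    {X₀ Xhat Y : Type*}
    [NormedAddCommGroup X₀] [InnerProductSpace ℂ X₀]
    [NormedAddCommGroup Xhat] [InnerProductSpace ℂ Xhat]
    [NormedAddCommGroup Y] [InnerProductSpace ℂ Y]
    (b₀ : X₀ →L[ℂ] Y →L⋆[ℂ] ℂ) (bhat : Xhat →L[ℂ] Y →L⋆[ℂ] ℂ)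
    (Xh0 : Submodule ℂ X₀)
    (Xhath : Submodule ℂ Xhat) (hXhath : FiniteDimensional ℂ Xhath)
    (Y₀ : Set Y) (hY₀ : Y₀ = {y : Y | ∀ uh ∈ Xhath, bhat uh y = 0})
    (T : X₀ × Xhat → Y)
    (hT : ∀ (u : X₀) (uhat : Xhat) (y : Y),
      (inner ℂ y (T (u, uhat)) : ℂ) = b₀ u y + bhat uhat y)
    (T₀ : X₀ → Y)
    (hT₀mem : ∀ u : X₀, T₀ u ∈ Y₀)
    (hT₀ : ∀ (u : X₀), ∀ y ∈ Y₀, (inner ℂ y (T₀ u) : ℂ) = b₀ u y) :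
    (T₀ '' (Xh0 : Set X₀)) ⊆ T '' ((Xh0.prod Xhath : Submodule ℂ (X₀ × Xhat)) : Set (X₀ × Xhat)) ∧
    ∀ (ℓ : Y →L⋆[ℂ] ℂ) (xh : X₀) (xhath : Xhat),
      (xh, xhath) ∈ Xh0.prod Xhath →
      (∀ y ∈ T '' ((Xh0.prod Xhath : Submodule ℂ (X₀ × Xhat)) : Set (X₀ × Xhat)),
        b₀ xh y + bhat xhath y = ℓ y) →
      ∀ y ∈ T₀ '' (Xh0 : Set X₀), b₀ xh y = ℓ y := by
  obtain ⟨L, hL⟩ : ∃ L : X₀ × Xhat →ₗ[ℂ] Y, ⇑L = T :=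
    ⟨(isLinearMap_of_inner_eq (b₀.coprod bhat : X₀ × Xhat →ₗ[ℂ] Y →L⋆[ℂ] ℂ)
      fun z y => hT z.1 z.2 y).mk' T, rfl⟩
  subst hL
  have horth_subset : ((Xhath.map (L ∘ₗ LinearMap.inr ℂ X₀ Xhat))ᗮ : Set Y) ⊆ Y₀ := by
    intro y hy
    simpa [hY₀, Submodule.mem_orthogonal', hT] using hy
  have hT₀_eq : ∀ u, ∃ û ∈ Xhath, L (u, û) = T₀ u := fun u =>
    exists_mem_apply_eq_of_inner_eq_on_orthogonal L Xhath u fun y hy => by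
      rw [hT₀ u y (horth_subset hy), hT, map_zero, zero_apply, add_zero]
  have himage : T₀ '' Xh0 ⊆ L '' (Xh0.prod Xhath) := by
    rintro _ ⟨u, hu, rfl⟩
    obtain ⟨û, hû, hLu⟩ := hT₀_eq u
    exact ⟨(u, û), ⟨hu, hû⟩, hLu⟩
  refine ⟨himage, fun ℓ xh xhath hx hsol y hy => ?_⟩
  obtain ⟨u, hu, rfl⟩ := hy
  have hbhat : bhat xhath (T₀ u) = 0 := by
    have hT₀u := hT₀mem u
    rw [hY₀] at hT₀u
    exact hT₀u xhath hx.2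
  simpa [hbhat] using hsol _ (himage ⟨u, hu, rfl⟩)

/-- Hybrid method theorem: with `X = X₀ × X̂`, `b((u,û),y) = b₀(u,y) + b̂(û,y)`,
`X_h = X_{h,0} × X̂_h`, `Y₀ = {y : b̂(û_h, y) = 0 ∀ û_h ∈ X̂_h}` closed, `T` the
trial-to-test operator for `b` and `T₀ : X₀ → Y₀` that for `b₀` (with test space `Y₀`),
we have `T₀(X_{h,0}) ⊆ T(X_h)`; consequently if `(x_h, x̂_h) ∈ X_h` solves the hybrid ideal
PG method, then `x_h` solves the ideal PG method for `b₀` with test space `T₀(X_{h,0})`. -/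
theorem stmt_11
    {X₀ Xhat Y : Type*}
    [NormedAddCommGroup X₀] [InnerProductSpace ℂ X₀] [CompleteSpace X₀]
    [NormedAddCommGroup Xhat] [InnerProductSpace ℂ Xhat] [CompleteSpace Xhat]
    [NormedAddCommGroup Y] [InnerProductSpace ℂ Y] [CompleteSpace Y]
    (b₀ : X₀ →L[ℂ] Y →L⋆[ℂ] ℂ) (bhat : Xhat →L[ℂ] Y →L⋆[ℂ] ℂ)
    (Xh0 : Submodule ℂ X₀) (hXh0 : FiniteDimensional ℂ Xh0)
    (Xhath : Submodule ℂ Xhat) (hXhath : FiniteDimensional ℂ Xhath)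
    (Y₀ : Set Y) (hY₀ : Y₀ = {y : Y | ∀ uh ∈ Xhath, bhat uh y = 0})
    (hY₀closed : IsClosed Y₀)
    (T : X₀ × Xhat → Y)
    (hT : ∀ (u : X₀) (uhat : Xhat) (y : Y),
      (inner ℂ y (T (u, uhat)) : ℂ) = b₀ u y + bhat uhat y)
    (T₀ : X₀ → Y)
    (hT₀mem : ∀ u : X₀, T₀ u ∈ Y₀)
    (hT₀ : ∀ (u : X₀), ∀ y ∈ Y₀, (inner ℂ y (T₀ u) : ℂ) = b₀ u y) :
    (T₀ '' (Xh0 : Set X₀)) ⊆ T '' ((Xh0.prod Xhath : Submodule ℂ (X₀ × Xhat)) : Set (X₀ × Xhat)) ∧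
    ∀ (ℓ : Y →L⋆[ℂ] ℂ) (xh : X₀) (xhath : Xhat),
      (xh, xhath) ∈ Xh0.prod Xhath →
      (∀ y ∈ T '' ((Xh0.prod Xhath : Submodule ℂ (X₀ × Xhat)) : Set (X₀ × Xhat)),
        b₀ xh y + bhat xhath y = ℓ y) →
      ∀ y ∈ T₀ '' (Xh0 : Set X₀), b₀ xh y = ℓ y :=
  stmt_11_general b₀ bhat Xh0 Xhath hXhath Y₀ hY₀ T hT T₀ hT₀mem hT₀
end

section
/- Under the well-posedness assumption and the Fortin condition (existence of Π : Y → Y^r with b(w_h, v−Πv)=0 ∀ w_h∈X_h, v∈Y and ‖Πv‖_Y ≤ C_Π‖v‖_Y), the operator T^r restricted to X_h is injective, so dim(T^r(X_h)) = dim(X_h). -/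
/-!
If `T^r w_h = 0` then `b(w_h, ·)` vanishes on `Y^r`, in particular on the range of the Fortin
operator `Π`; the Fortin condition makes it vanish on every `v - Π v` as well, so `b(w_h, ·) = 0`
and `w_h = 0` by the uniqueness assumption. An injective linear map preserves dimension.
-/

theorem map_eq_zero_of_vanishing_on_range_and_defect {Y M F : Type*} [AddCommGroup Y]
    [AddCommGroup M] [FunLike F Y M] [AddMonoidHomClass F Y M] (φ : F) (P : Y → Y)
    (hrange : ∀ v, φ (P v) = 0) (hdefect : ∀ v, φ (v - P v) = 0) (v : Y) : φ v = 0 := by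
  rw [← sub_add_cancel v (P v), map_add, hrange, hdefect, add_zero]

theorem Module.finrank_map_eq_of_injOn {K V W : Type*} [DivisionRing K] [AddCommGroup V]
    [Module K V] [AddCommGroup W] [Module K W] (f : V →ₗ[K] W) {p : Submodule K V}
    (hf : Set.InjOn f p) : Module.finrank K (p.map f) = Module.finrank K p := by
  rw [← LinearMap.range_domRestrict]
  exact LinearMap.finrank_range_of_inj (Set.injOn_iff_injective.mp hf)

section Fortin

variable {𝕜 X Y : Type*} [RCLike 𝕜] [NormedAddCommGroup X] [NormedSpace 𝕜 X]
  [NormedAddCommGroup Y] [InnerProductSpace 𝕜 Y]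
  {b : X →L[𝕜] Y →L⋆[𝕜] 𝕜} {Yr : Submodule 𝕜 Y} {Tr : X →ₗ[𝕜] Y}

theorem apply_eq_zero_of_map_eq_zero (hTr : ∀ w : X, ∀ y ∈ Yr, (inner 𝕜 y (Tr w) : 𝕜) = b w y)
    {w : X} (hw : Tr w = 0) {y : Y} (hy : y ∈ Yr) : b w y = 0 := by
  rw [← hTr w y hy, hw, inner_zero_right]

theorem injOn_of_fortin (huniq : ∀ z : X, (∀ y : Y, b z y = 0) → z = 0) (Xh : Submodule 𝕜 X)
    (hTr : ∀ w : X, ∀ y ∈ Yr, (inner 𝕜 y (Tr w) : 𝕜) = b w y) (Fortin : Y → Y)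
    (hFmem : ∀ v : Y, Fortin v ∈ Yr) (hFb : ∀ wh ∈ Xh, ∀ v : Y, b wh (v - Fortin v) = 0) :
    Set.InjOn Tr (Xh : Set X) := by
  refine LinearMap.disjoint_ker_iff_injOn.mp (Submodule.disjoint_def.mpr fun z hz hTz ↦ ?_)
  exact huniq z <| map_eq_zero_of_vanishing_on_range_and_defect (b z) Fortin
    (fun v ↦ apply_eq_zero_of_map_eq_zero hTr hTz (hFmem v)) (hFb z hz)

end Fortin

theorem stmt_13_general
    {X Y : Type*} [NormedAddCommGroup X] [InnerProductSpace ℂ X] [CompleteSpace X]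
    [NormedAddCommGroup Y] [InnerProductSpace ℂ Y] [CompleteSpace Y]
    (b : X →L[ℂ] Y →L⋆[ℂ] ℂ)
    (huniq : ∀ z : X, (∀ y : Y, b z y = 0) → z = 0)
    (Xh : Submodule ℂ X)
    (Yr : Submodule ℂ Y)
    (Tr : X →ₗ[ℂ] Y)
    (hTr : ∀ (w : X), ∀ y ∈ Yr, (inner ℂ y (Tr w) : ℂ) = b w y)
    (Fortin : Y →ₗ[ℂ] Y)
    (hFmem : ∀ v : Y, Fortin v ∈ Yr)
    (hFb : ∀ wh ∈ Xh, ∀ v : Y, b wh (v - Fortin v) = 0) :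
    Set.InjOn Tr (Xh : Set X) ∧
    Module.finrank ℂ (Xh.map Tr) = Module.finrank ℂ Xh := by
  have hinj := injOn_of_fortin huniq Xh hTr Fortin hFmem hFb
  exact ⟨hinj, Module.finrank_map_eq_of_injOn Tr hinj⟩

/-- Under the uniqueness part of the well-posedness assumption and the Fortin condition,
the operator `T^r` restricted to `X_h` is injective, so `dim (T^r(X_h)) = dim X_h`. -/
theorem stmt_13
    {X Y : Type*} [NormedAddCommGroup X] [InnerProductSpace ℂ X] [CompleteSpace X]
    [NormedAddCommGroup Y] [InnerProductSpace ℂ Y] [CompleteSpace Y]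
    (b : X →L[ℂ] Y →L⋆[ℂ] ℂ)
    (huniq : ∀ z : X, (∀ y : Y, b z y = 0) → z = 0)
    (Xh : Submodule ℂ X) (hXh : FiniteDimensional ℂ Xh)
    (Yr : Submodule ℂ Y) (hYr : IsClosed (Yr : Set Y))
    (Tr : X →ₗ[ℂ] Y)
    (hTrmem : ∀ w : X, Tr w ∈ Yr)
    (hTr : ∀ (w : X), ∀ y ∈ Yr, (inner ℂ y (Tr w) : ℂ) = b w y)
    (CF : ℝ) (hCF : 0 < CF)
    (Fortin : Y →ₗ[ℂ] Y)
    (hFmem : ∀ v : Y, Fortin v ∈ Yr)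
    (hFb : ∀ wh ∈ Xh, ∀ v : Y, b wh (v - Fortin v) = 0)
    (hFbdd : ∀ v : Y, ‖Fortin v‖ ≤ CF * ‖v‖) :
    Set.InjOn Tr (Xh : Set X) ∧
    Module.finrank ℂ (Xh.map Tr) = Module.finrank ℂ Xh :=
  stmt_13_general b huniq Xh Yr Tr hTr Fortin hFmem hFb
end

section
/- In the 1D setting with Ω=(0,1), X = L²(Ω) × ℝ, Y = H¹(Ω) with norm ‖v‖_Y² = ‖v'‖²_{L²} + |v(1)|², and b((u,û₁),v) = û₁v(1) − ∫₀¹ uv', the form satisfies the two-sided bound sup_{0≠z∈X} |b(z,v)|/‖z‖_X = ‖v‖_Y for all v ∈ Y (i.e., the inf-sup and continuity constants both equal 1), and {z ∈ X : b(z,v)=0 ∀v∈Y} = {0}. -/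
open MeasureTheory Set
open scoped RealInnerProductSpace BoundedContinuousFunction

/-!
Write `w = v' ∈ L²(0,1)`. Then `b((u,û₁),v) = ⟪(u,û₁), (-w, v(1))⟫` in the Hilbert sum
`L²(0,1) ⊕₂ ℝ`, whose norm is `‖·‖_X`, so the supremum is the dual norm of `(-w, v(1))`, i.e.
its norm `‖v‖_Y`, attained at `z = (-w, v(1))` by the equality case of Cauchy–Schwarz.
If `b(z,·) = 0`, then `v ≡ 1` gives `û₁ = 0`, and `v = ∫₀ˣ f` for bounded continuous `f` shows
that `u` is orthogonal to a dense subspace of `L²(0,1)`.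
-/

theorem isGreatest_abs_inner_div_norm {F : Type*} [NormedAddCommGroup F] [InnerProductSpace ℝ F]
    [Nontrivial F] (w : F) :
    IsGreatest {t | ∃ z : F, z ≠ 0 ∧ t = |⟪z, w⟫| / ‖z‖} ‖w‖ := by
  refine ⟨?_, ?_⟩
  · rcases eq_or_ne w 0 with rfl | hw
    · obtain ⟨z, hz⟩ := exists_ne (0 : F)
      exact ⟨z, hz, by simp⟩
    · refine ⟨w, hw, ?_⟩
      rw [real_inner_self_eq_norm_sq, abs_of_nonneg (by positivity), sq, mul_div_assoc,
        div_self (norm_ne_zero_iff.mpr hw), mul_one]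
  · rintro t ⟨z, hz, rfl⟩
    rw [div_le_iff₀ (norm_pos_iff.mpr hz), mul_comm]
    exact abs_real_inner_le_norm z w

theorem isGreatest_abs_mul_sub_inner_div_sqrt {E : Type*} [NormedAddCommGroup E]
    [InnerProductSpace ℝ E] (w : E) (a : ℝ) :
    IsGreatest {t | ∃ (u : E) (u₁ : ℝ), ¬(u = 0 ∧ u₁ = 0) ∧
        t = |u₁ * a - ⟪u, w⟫| / √(‖u‖ ^ 2 + u₁ ^ 2)} (√(‖w‖ ^ 2 + a ^ 2)) := by
  have hvalue (u : E) (u₁ : ℝ) : |⟪WithLp.toLp 2 (u, u₁), WithLp.toLp 2 (-w, a)⟫| /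
      ‖WithLp.toLp 2 (u, u₁)‖ = |u₁ * a - ⟪u, w⟫| / √(‖u‖ ^ 2 + u₁ ^ 2) := by
    simp [WithLp.prod_inner_apply, WithLp.prod_norm_eq_of_L2, mul_comm, sub_eq_neg_add]
  convert isGreatest_abs_inner_div_norm (WithLp.toLp 2 (-w, a)) using 1
  · ext t
    constructor
    · rintro ⟨u, u₁, hne, rfl⟩
      exact ⟨_, by simpa using hne, (hvalue u u₁).symm⟩
    · rintro ⟨⟨u, u₁⟩, hz, rfl⟩
      exact ⟨u, u₁, by simpa using hz, hvalue u u₁⟩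
  · simp [WithLp.prod_norm_eq_of_L2]

namespace MeasureTheory

variable {α : Type*} [MeasurableSpace α] {μ : Measure α}

theorem L2.integral_mul_eq_inner (u : Lp ℝ 2 μ) {g : α → ℝ} (hg : MemLp g 2 μ) :
    ∫ x, u x * g x ∂μ = ⟪u, hg.toLp g⟫ := by
  rw [L2.inner_def]
  refine integral_congr_ae ?_
  filter_upwards [hg.coeFn_toLp] with x hx
  simp [hx, mul_comm]

theorem L2.norm_toLp_sq {g : α → ℝ} (hg : MemLp g 2 μ) :
    ‖hg.toLp g‖ ^ 2 = ∫ x, g x ^ 2 ∂μ := by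
  rw [← real_inner_self_eq_norm_sq, ← L2.integral_mul_eq_inner _ hg]
  refine integral_congr_ae ?_
  filter_upwards [hg.coeFn_toLp] with x hx
  rw [hx, sq]

theorem L2.eq_zero_of_forall_integral_mul_eq_zero [TopologicalSpace α] [NormalSpace α]
    [BorelSpace α] [IsFiniteMeasure μ] [μ.WeaklyRegular]
    (u : Lp ℝ 2 μ) (h : ∀ f : α →ᵇ ℝ, ∫ x, u x * f x ∂μ = 0) : u = 0 := by
  have hdense := BoundedContinuousFunction.toLp_denseRange ℝ μ (p := 2) ℝ ENNReal.ofNat_ne_top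
  refine hdense.eq_zero_of_inner_left ℝ fun f => ?_
  rw [L2.inner_def, ← h f]
  refine integral_congr_ae ?_
  filter_upwards [BoundedContinuousFunction.coeFn_toLp 2 μ ℝ f] with x hx
  simp [hx, mul_comm]

end MeasureTheory

theorem memLp_two_restrict_Ioo_of_hasDerivAt {v g : ℝ → ℝ} {a b : ℝ}
    (hd : ∀ x ∈ Ioo a b, HasDerivAt v (g x) x)
    (hi : IntervalIntegrable (fun x => g x ^ 2) volume a b) :
    MemLp g 2 (volume.restrict (Ioo a b)) := by
  have hmeas : AEStronglyMeasurable g (volume.restrict (Ioo a b)) :=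
    (measurable_deriv v).aestronglyMeasurable.congr <|
      (ae_restrict_iff' measurableSet_Ioo).mpr <| .of_forall fun x hx => (hd x hx).deriv
  rw [memLp_two_iff_integrable_sq hmeas]
  exact hi.1.mono_set Ioo_subset_Ioc_self

/-- For the 1D formulation with `X = L²(0,1) × ℝ`, `Y = H¹(0,1)` (modeled by an
everywhere-differentiable representative `v` with derivative `g ∈ L²(0,1)`), norm
`‖v‖_Y² = ‖v'‖²_{L²} + |v(1)|²`, and `b((u,û₁),v) = û₁ v(1) − ∫₀¹ u v'`:
for every `v ∈ Y` the supremum of `|b(z,v)|/‖z‖_X` over nonzero `z ∈ X` is attained and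
equals `‖v‖_Y` (so the inf-sup and continuity constants are both 1), and
`{z ∈ X : b(z,v) = 0 ∀ v ∈ Y} = {0}`. -/
theorem stmt_15 :
    (∀ v g : ℝ → ℝ,
      (∀ x ∈ Set.Icc (0:ℝ) 1, HasDerivAt v (g x) x) →
      IntervalIntegrable (fun x => (g x)^2) volume 0 1 →
      IsGreatest
        {t : ℝ | ∃ (u : Lp ℝ 2 (volume.restrict (Set.Ioo (0:ℝ) 1))) (u1 : ℝ),
          ¬(u = 0 ∧ u1 = 0) ∧
          t = |u1 * v 1 - ∫ x in Set.Ioo (0:ℝ) 1, (u : ℝ → ℝ) x * g x| /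
              Real.sqrt (‖u‖^2 + u1^2)}
        (Real.sqrt ((∫ x in (0:ℝ)..1, (g x)^2) + (v 1)^2))) ∧
    (∀ (u : Lp ℝ 2 (volume.restrict (Set.Ioo (0:ℝ) 1))) (u1 : ℝ),
      (∀ v g : ℝ → ℝ,
        (∀ x ∈ Set.Icc (0:ℝ) 1, HasDerivAt v (g x) x) →
        IntervalIntegrable (fun x => (g x)^2) volume 0 1 →
        u1 * v 1 - (∫ x in Set.Ioo (0:ℝ) 1, (u : ℝ → ℝ) x * g x) = 0) →
      u = 0 ∧ u1 = 0) := by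
  refine ⟨fun v g hd hi => ?_, fun u u₁ hb => ?_⟩
  · have hg : MemLp g 2 (volume.restrict (Ioo (0:ℝ) 1)) :=
      memLp_two_restrict_Ioo_of_hasDerivAt (fun x hx => hd x (Ioo_subset_Icc_self hx)) hi
    have hnorm : ∫ x in (0:ℝ)..1, g x ^ 2 = ‖hg.toLp g‖ ^ 2 := by
      rw [L2.norm_toLp_sq, intervalIntegral.integral_of_le zero_le_one,
        integral_Ioc_eq_integral_Ioo]
    simp_rw [hnorm, L2.integral_mul_eq_inner _ hg]
    exact isGreatest_abs_mul_sub_inner_div_sqrt _ _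
  · have hu₁ : u₁ = 0 := by
      simpa using hb (fun _ => 1) (fun _ => 0) (fun x _ => hasDerivAt_const x 1) (by simp)
    refine ⟨L2.eq_zero_of_forall_integral_mul_eq_zero u fun f => ?_, hu₁⟩
    simpa [hu₁] using hb _ _ (fun x _ => (f.continuous.integral_hasStrictDerivAt 0 x).hasDerivAt)
      ((f.continuous.pow 2).intervalIntegrable 0 1)
end
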